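/- arXiv:1501.05874 — 5 statements merged into one kernel-verified Lean document; each statement's English description precedes it below -/
import Mathlib

section
/- For all real numbers x ≥ 2, the inequality x^{-2} + x^{-2/x} < 1 holds. -/
theorem stmt_0 : ∀ x : ℝ, 2 ≤ x → x ^ (-2 : ℝ) + x ^ (-(2 / x)) < 1 := by
  intro x hx
  have hx0 : (0:ℝ) < x := by linarith
  have hlog : Real.log x > 1/2 := by
    have h2 : Real.log 2 > 1/2 := by
      have := Real.log_two_gt_d9; linarith
    have := Real.log_le_log (by norm_num) hx
    linarith
  set t := x ^ ((2:ℝ)/x) with ht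
  have ht1 : 1 + (2/x) * Real.log x ≤ t := by
    rw [ht, Real.rpow_def_of_pos hx0]
    have := Real.add_one_le_exp (Real.log x * (2/x))
    nlinarith
  have hgt : t > 1 + 1/x := by
    have h1 : (2/x) * Real.log x > (2/x) * (1/2) := by
      apply mul_lt_mul_of_pos_left hlog (by positivity)
    have : (2/x) * (1/2) = 1/x := by ring
    linarith
  have ht0 : (0:ℝ) < t := by
    have : (0:ℝ) < 1 + 1/x := by positivity
    linarith
  have e1 : x ^ (-(2 / x)) = t⁻¹ := by
    rw [ht, ← Real.rpow_neg hx0.le]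
  have e2 : x ^ (-2 : ℝ) = (x^2)⁻¹ := by
    rw [show (-2:ℝ) = ((-2:ℤ):ℝ) by norm_num, Real.rpow_intCast]
    simp [zpow_neg]
  rw [e1, e2]
  rw [inv_eq_one_div, inv_eq_one_div, div_add_div _ _ (by positivity) (by positivity),
    div_lt_one (by positivity)]
  have hgt' : x + 1 < x * t := by
    have h := mul_lt_mul_of_pos_left hgt hx0
    have hxx : x * (1 + 1/x) = x + 1 := by field_simp
    linarith
  have hle : t ≤ x := by
    have h : x ^ ((2:ℝ)/x) ≤ x ^ (1:ℝ) :=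
      Real.rpow_le_rpow_of_exponent_le (by linarith) (by rw [div_le_one hx0]; linarith)
    simpa [ht] using h
  nlinarith [mul_lt_mul_of_pos_left hgt' hx0]
end

section
/- For all real d ≥ 2, e^{-2 log d} + e^{-(2 log d)/d} < 1. -/
theorem stmt_1 : ∀ d : ℝ, 2 ≤ d →
    Real.exp (-(2 * Real.log d)) + Real.exp (-(2 * Real.log d) / d) < 1 := by
  intro d hd
  have hd0 : (0:ℝ) < d := by linarith
  have hL : (1:ℝ)/2 < Real.log d := by
    have h9 := Real.log_two_gt_d9
    have h2 : Real.log 2 ≤ Real.log d := Real.log_le_log (by norm_num) hd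
    linarith
  set L := Real.log d with hLdef
  have hexp2 : Real.exp (2*L) = d^2 := by
    rw [two_mul, Real.exp_add, Real.exp_log hd0]; ring
  have h1 : Real.exp (-(2*L)) = 1 / d^2 := by
    rw [Real.exp_neg, hexp2, one_div]
  set t : ℝ := 2*L/d with htdef
  have ht0 : 0 < t := by positivity
  have h2 : Real.exp (-(2*L)/d) < 1 / (1 + t) := by
    have heq : -(2*L)/d = -t := by rw [htdef]; ring
    rw [heq, Real.exp_neg, ← one_div]
    have h3 : 1 + t < Real.exp t := by
      have := Real.add_one_lt_exp (ne_of_gt ht0)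
      linarith
    exact one_div_lt_one_div_of_lt (by linarith) h3
  have key : d < 2*(d^2-1)*L := by
    nlinarith [mul_pos (show (0:ℝ) < d^2-1 by nlinarith) (show (0:ℝ) < 2*L-1 by linarith)]
  have htd : t * d = 2 * L := by rw [htdef]; field_simp
  have hinv : (1/d^2) * d^2 = 1 := by field_simp
  have hfinal : 1/(1+t) < 1 - 1/d^2 := by
    rw [div_lt_iff₀ (by positivity)]
    have hu0 : 0 < 1/d^2 := by positivity
    nlinarith [key, htd, hinv, mul_pos hd0 hd0, mul_pos ht0 hd0]
  rw [h1]; linarith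
end

section
/- The function f(x) = x^{-2} + x^{-2/x} is increasing on the interval [8, ∞). -/
/-!
The derivative of `f x = x ^ (-2) + x ^ (-(2 / x))` is
`(2 / x ^ 2) * (x ^ (-(2 / x)) * (log x - 1) - x⁻¹)`.
Since `x⁻¹ = x ^ (-(2 / x)) * x ^ (2 / x - 1)`, it is positive as soon as
`x ^ (2 / x - 1) < log x - 1`; for `x > e²` the left side is below `1` (as `2 / x < 1`)
and the right side above `1`. Finally `e² < 8`.
-/

open Real Set

lemma exp_two_lt_eight : exp 2 < 8 := by
  have h := exp_one_lt_d9
  rw [show (2 : ℝ) = (2 : ℕ) by norm_num, ← exp_one_pow]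
  nlinarith [exp_pos 1]

lemma hasDerivAt_rpow_neg_div_self (c : ℝ) {x : ℝ} (hx : 0 < x) :
    HasDerivAt (fun y : ℝ => y ^ (-(c / y))) (x ^ (-(c / x)) * (c / x ^ 2 * (log x - 1))) x := by
  have hg : HasDerivAt (fun y : ℝ => -(c / y)) (c / x ^ 2) x := by
    refine ((hasDerivAt_const x c).div (hasDerivAt_id x) hx.ne').neg.congr_deriv ?_
    simp only [id]
    ring
  refine ((hasDerivAt_id x).rpow hg hx).congr_deriv ?_
  simp only [id, rpow_sub_one hx.ne']
  field_simp
  ring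

lemma inv_lt_rpow_neg_two_div_self_mul_log_sub_one {x : ℝ} (hx : exp 2 < x) :
    x⁻¹ < x ^ (-(2 / x)) * (log x - 1) := by
  have hx0 : 0 < x := (exp_pos 2).trans hx
  have hlog : 2 < log x := (lt_log_iff_exp_lt hx0).2 hx
  have hx2 : 2 < x := by linarith [add_one_le_exp 2]
  have hexp : x ^ (2 / x - 1) < 1 :=
    rpow_lt_one_of_one_lt_of_neg (by linarith) (by rw [sub_neg, div_lt_one hx0]; exact hx2)
  calc x⁻¹ = x ^ (-(2 / x)) * x ^ (2 / x - 1) := by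
        rw [← rpow_add hx0, show -(2 / x) + (2 / x - 1) = -1 by ring, rpow_neg_one]
    _ < x ^ (-(2 / x)) * (log x - 1) :=
        mul_lt_mul_of_pos_left (by linarith) (rpow_pos_of_pos hx0 _)

lemma strictMonoOn_rpow_neg_two_add_rpow_neg_two_div_self :
    StrictMonoOn (fun x : ℝ => x ^ (-2 : ℝ) + x ^ (-(2 / x))) (Ici (exp 2)) := by
  have hderiv : ∀ x : ℝ, 0 < x → HasDerivAt (fun y : ℝ => y ^ (-2 : ℝ) + y ^ (-(2 / y)))
      (2 / x ^ 2 * (x ^ (-(2 / x)) * (log x - 1) - x⁻¹)) x := fun x hx => by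
    refine ((hasDerivAt_rpow_const (p := -2) (Or.inl hx.ne')).add
      (hasDerivAt_rpow_neg_div_self 2 hx)).congr_deriv ?_
    rw [show (-2 : ℝ) - 1 = -(3 : ℕ) by norm_num, rpow_neg hx.le, rpow_natCast]
    field_simp
    ring
  have hpos : ∀ x ∈ Ici (exp 2), 0 < x := fun x hx => (exp_pos 2).trans_le hx
  refine strictMonoOn_of_hasDerivWithinAt_pos (convex_Ici _)
    (fun x hx => (hderiv x (hpos x hx)).continuousAt.continuousWithinAt)
    (fun x hx => (hderiv x (hpos x (interior_subset hx))).hasDerivWithinAt) fun x hx => ?_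
  rw [interior_Ici] at hx
  exact mul_pos (by have := (exp_pos 2).trans hx; positivity)
    (sub_pos.2 (inv_lt_rpow_neg_two_div_self_mul_log_sub_one hx))

theorem stmt_2 :
    StrictMonoOn (fun x : ℝ => x ^ (-2 : ℝ) + x ^ (-(2 / x))) (Set.Ici (8 : ℝ)) :=
  strictMonoOn_rpow_neg_two_add_rpow_neg_two_div_self.mono (Ici_subset_Ici.2 exp_two_lt_eight.le)
end

section
/- Let λ₁ ≤ λ₂ be positive reals. Then the Poisson distribution with parameter λ₁ conditioned to be nonzero is stochastically dominated by the Poisson distribution with parameter λ₂ conditioned to be nonzero; that is, for every k ≥ 1, P[Z̄_{λ₁} ≥ k] ≤ P[Z̄_{λ₂} ≥ k]. -/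
/-- The probability mass function of a Poisson distribution with parameter `a`
conditioned to be nonzero. -/
noncomputable def condPoissonPMF (a : ℝ) (k : ℕ) : ℝ :=
  if k = 0 then 0 else (Real.exp (-a) * a ^ k / k.factorial) / (1 - Real.exp (-a))

/-!
The ratio `condPoissonPMF l₂ j / condPoissonPMF l₁ j` is a positive constant times `(l₂ / l₁) ^ j`,
hence nondecreasing in `j`, and such a likelihood ratio order implies stochastic order: from
`p j * q i ≤ p i * q j` for `i < k ≤ j`, summing over `i < k` and `j ≥ k` gives
`P[≥ k] * Q[< k] ≤ Q[≥ k] * P[< k]`, which for total masses `1` reads `P[≥ k] ≤ Q[≥ k]`.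
-/

open Finset Real

open scoped Nat

/-- `q j / p j` is nondecreasing in `j`, stated without division so that zero masses are allowed. -/
def LikelihoodRatioLE (p q : ℕ → ℝ) : Prop :=
  ∀ ⦃i j : ℕ⦄, i ≤ j → p j * q i ≤ p i * q j

section Tail

variable {p q : ℕ → ℝ}

lemma Summable.ite_le (hp : Summable p) (k : ℕ) : Summable fun j => if k ≤ j then p j else 0 := by
  refine (summable_nat_add_iff k).mp ?_
  simpa using (summable_nat_add_iff k).mpr hp

lemma Summable.sum_range_add_tsum_ite_le (hp : Summable p) (k : ℕ) :
    ∑ j ∈ range k, p j + ∑' j, (if k ≤ j then p j else 0) = ∑' j, p j := by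
  rw [← hp.sum_add_tsum_nat_add k, ← (hp.ite_le k).sum_add_tsum_nat_add k,
    sum_eq_zero fun j hj => if_neg (by simpa using hj)]
  simp

theorem LikelihoodRatioLE.tsum_ite_le_mul_tsum_le (h : LikelihoodRatioLE p q) (hp : Summable p)
    (hq : Summable q) (k : ℕ) :
    (∑' j, if k ≤ j then p j else 0) * ∑' j, q j ≤
      (∑' j, if k ≤ j then q j else 0) * ∑' j, p j := by
  rw [← hp.sum_range_add_tsum_ite_le k, ← hq.sum_range_add_tsum_ite_le k]
  suffices (∑' j, if k ≤ j then p j else 0) * ∑ i ∈ range k, q i ≤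
      (∑' j, if k ≤ j then q j else 0) * ∑ i ∈ range k, p i by linarith
  simp only [mul_sum, ← tsum_mul_right]
  refine sum_le_sum fun i hi => Summable.tsum_le_tsum (fun j => ?_)
    ((hp.ite_le k).mul_right _) ((hq.ite_le k).mul_right _)
  split_ifs with hj
  · rw [mul_comm (q j)]
    exact h (by simp at hi; omega)
  · simp

theorem LikelihoodRatioLE.tsum_ite_le_le (h : LikelihoodRatioLE p q) (hp : HasSum p 1)
    (hq : HasSum q 1) (k : ℕ) :
    (∑' j, if k ≤ j then p j else 0) ≤ ∑' j, if k ≤ j then q j else 0 := by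
  simpa [hp.tsum_eq, hq.tsum_eq] using h.tsum_ite_le_mul_tsum_le hp.summable hq.summable k

end Tail

lemma pow_mul_pow_le_pow_mul_pow {R : Type*} [CommSemiring R] [PartialOrder R] [IsOrderedRing R]
    {a b : R} (ha : 0 ≤ a) (hab : a ≤ b) {i j : ℕ} (hij : i ≤ j) :
    a ^ j * b ^ i ≤ a ^ i * b ^ j := by
  obtain ⟨d, rfl⟩ := Nat.exists_eq_add_of_le hij
  have hb : 0 ≤ b := ha.trans hab
  calc a ^ (i + d) * b ^ i = (a ^ i * b ^ i) * a ^ d := by ring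
    _ ≤ (a ^ i * b ^ i) * b ^ d := by gcongr
    _ = a ^ i * b ^ (i + d) := by ring

lemma one_sub_exp_neg_pos {l : ℝ} (hl : 0 < l) : 0 < 1 - exp (-l) := by
  simpa using hl

lemma hasSum_condPoissonPMF {l : ℝ} (hl : 0 < l) : HasSum (condPoissonPMF l) 1 := by
  have hpoisson : HasSum (fun n => exp (-l) * l ^ n / n !) 1 :=
    ProbabilityTheory.hasSum_one_poissonMeasure ⟨l, hl.le⟩
  have hcond : condPoissonPMF l =
      fun n => Function.update (fun n => exp (-l) * l ^ n / n !) 0 0 n / (1 - exp (-l)) := by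
    ext n
    rcases eq_or_ne n 0 with rfl | hn <;> simp [condPoissonPMF, *]
  have hmass : (0 - exp (-l) * l ^ 0 / (0 ! : ℝ) + 1) / (1 - exp (-l)) = 1 := by
    rw [div_eq_one_iff_eq (one_sub_exp_neg_pos hl).ne']
    simp only [pow_zero, Nat.factorial_zero, Nat.cast_one, mul_one, div_one]
    ring
  have h := (hpoisson.update 0 0).div_const (1 - exp (-l))
  rwa [hmass, ← hcond] at h

lemma likelihoodRatioLE_condPoissonPMF {l₁ l₂ : ℝ} (h₁ : 0 < l₁) (h₁₂ : l₁ ≤ l₂) :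
    LikelihoodRatioLE (condPoissonPMF l₁) (condPoissonPMF l₂) := by
  intro i j hij
  rcases eq_or_ne i 0 with rfl | hi
  · simp [condPoissonPMF]
  have hj : j ≠ 0 := by omega
  have hc₁ := one_sub_exp_neg_pos h₁
  have hc₂ := one_sub_exp_neg_pos (h₁.trans_le h₁₂)
  have hc : 0 ≤ exp (-l₁) / (1 - exp (-l₁)) * (exp (-l₂) / (1 - exp (-l₂))) / (j ! * i !) := by
    positivity
  simp only [condPoissonPMF, hi, hj, if_false]
  calc _ = exp (-l₁) / (1 - exp (-l₁)) * (exp (-l₂) / (1 - exp (-l₂))) / (j ! * i !) *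
        (l₁ ^ j * l₂ ^ i) := by ring
    _ ≤ exp (-l₁) / (1 - exp (-l₁)) * (exp (-l₂) / (1 - exp (-l₂))) / (j ! * i !) *
        (l₁ ^ i * l₂ ^ j) :=
      mul_le_mul_of_nonneg_left (pow_mul_pow_le_pow_mul_pow h₁.le h₁₂ hij) hc
    _ = _ := by ring

theorem stmt_4 (l₁ l₂ : ℝ) (h₁ : 0 < l₁) (h₁₂ : l₁ ≤ l₂) :
    ∀ k : ℕ, 1 ≤ k →
      (∑' j : ℕ, if k ≤ j then condPoissonPMF l₁ j else 0) ≤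
      (∑' j : ℕ, if k ≤ j then condPoissonPMF l₂ j else 0) := by
  intro k _
  exact (likelihoodRatioLE_condPoissonPMF h₁ h₁₂).tsum_ite_le_le (hasSum_condPoissonPMF h₁)
    (hasSum_condPoissonPMF (h₁.trans_le h₁₂)) k
end

section
/- Let d ≥ 2 be an integer, let m > 2 log d, and choose ε > 0 such that exp(−ε/d) ≥ e^{−m} + e^{−m/d}. Then for all λ ≥ 0: 1 − exp(−(λ+ε)/d) ≤ (1 − exp(−λ/d − m))·(1 − exp(−(λ+m)/d)). -/
theorem stmt_11 (d : ℕ) (hd : 2 ≤ d) (m ε : ℝ) (hm : 2 * Real.log d < m)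
    (hε : 0 < ε) (hεd : Real.exp (-m) + Real.exp (-m / d) ≤ Real.exp (-ε / d)) :
    ∀ l : ℝ, 0 ≤ l →
      1 - Real.exp (-((l + ε) / d)) ≤
        (1 - Real.exp (-(l / d) - m)) * (1 - Real.exp (-((l + m) / d))) := by
  intro l hl
  have hd0 : (0:ℝ) < (d:ℝ) := by
    have : (0:ℕ) < d := by omega
    exact_mod_cast this
  have h1 : Real.exp (-((l + ε) / d)) = Real.exp (-(l / d)) * Real.exp (-ε / d) := by
    rw [← Real.exp_add]; ring_nf
  have h2 : Real.exp (-(l / d) - m) = Real.exp (-(l / d)) * Real.exp (-m) := by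
    rw [← Real.exp_add]; ring_nf
  have h3 : Real.exp (-((l + m) / d)) = Real.exp (-(l / d)) * Real.exp (-m / d) := by
    rw [← Real.exp_add]; ring_nf
  rw [h1, h2, h3]
  have ha : 0 < Real.exp (-(l / d)) := Real.exp_pos _
  have ha1 : Real.exp (-(l / d)) ≤ 1 := by
    rw [Real.exp_le_one_iff]; exact neg_nonpos.mpr (by positivity)
  have hb : 0 < Real.exp (-m) := Real.exp_pos _
  have hc : 0 < Real.exp (-m / d) := Real.exp_pos _
  nlinarith [mul_pos (mul_pos ha ha) (mul_pos hb hc),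
    mul_le_mul_of_nonneg_left hεd ha.le]
end
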